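/- (Theorem 3.2, Lipschitz-type estimate) Let n ≥ 1 be a natural number, 0 < q < p ≤ 1, 0 < α ≤ 1, M > 0, and let E be a nonempty closed subset of [0,∞). Then for every f ∈ W̃_{α,E} with constant M and every x ≥ 0, | L_n^{p,q}(f;x) − pq·f(x) | ≤ M·( δ_n(x)^{α/2} + 2·d(x,E)^α ). -/

import Mathlib

/-!
Write `φ t = t / (1 + t)`. The operator is a positive combination `L_n(f; x) = ∑ c_k f(t_k)`
whose weights add up to `pq ≤ 1` by the `(p,q)`-binomial theorem
`∑ p^(n-k choose 2) q^(k choose 2) [n, k] x^k = ℓ_n(x)`. If `y ∈ E` is a point nearest to `x`,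
the condition at `y`, subadditivity of `s ↦ s^α` and the fact that `φ` is `1`-Lipschitz on
`[0, ∞)` give `|f t - f x| ≤ M (|φ t - φ x|^α + 2 d(x, E)^α)`. Summing against the `c_k` and
applying Hölder's inequality with exponent `2/α` leaves the second moment `L_n((φ - φ x)^2; x)`.
Since `φ(t_k) = p^(n-k+1) [k] / [n+1]`, that moment comes from the first two moments of the
binomial weights, which the absorption identity `[k] [n, k] = [n] [n-1, k-1]` reduces to shifted
binomial theorems; it is at most `δ_n(x)`.
-/

open Finset Filter
open scoped Classical

noncomputable section

/-- The `(p,q)`-integer `[n]_{p,q} = (p^n - q^n)/(p - q)`. -/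
def pqInt (p q : ℝ) (n : ℕ) : ℝ := (p ^ n - q ^ n) / (p - q)

/-- The `(p,q)`-factorial. -/
def pqFact (p q : ℝ) : ℕ → ℝ
  | 0 => 1
  | n + 1 => pqFact p q n * pqInt p q (n + 1)

/-- The `(p,q)`-binomial coefficient. -/
def pqBinom (p q : ℝ) (n k : ℕ) : ℝ :=
  pqFact p q n / (pqFact p q k * pqFact p q (n - k))

/-- `ℓ_n^{p,q}(x) = ∏_{s=0}^{n-1} (p^s + q^s x)`. -/
def pqEll (p q : ℝ) (n : ℕ) (x : ℝ) : ℝ :=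
  ∏ s ∈ Finset.range n, (p ^ s + q ^ s * x)

/-- The node `p^{n-k+1}[k]_{p,q} / ([n-k+1]_{p,q} q^k)`. -/
def pqNode (p q : ℝ) (n k : ℕ) : ℝ :=
  p ^ (n - k + 1) * pqInt p q k / (pqInt p q (n - k + 1) * q ^ k)

/-- The `(p,q)`-Bleimann–Butzer–Hahn operator. -/
def bbh (p q : ℝ) (n : ℕ) (f : ℝ → ℝ) (x : ℝ) : ℝ :=
  (p * q / pqEll p q n x) *
    ∑ k ∈ Finset.range (n + 1),
      f (pqNode p q n k) * p ^ ((n - k) * (n - k - 1) / 2) *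
        q ^ (k * (k - 1) / 2) * pqBinom p q n k * x ^ k

/-- `δ_n(x)` from Theorem 3.1. -/
def pqDelta (p q : ℝ) (n : ℕ) (x : ℝ) : ℝ :=
  (x / (1 + x)) ^ 2 *
      (p ^ 2 * q ^ 3 * pqInt p q n * pqInt p q (n - 1) / (pqInt p q (n + 1)) ^ 2 *
          ((1 + x) / (p + q * x)) -
        2 * p * q * pqInt p q n / pqInt p q (n + 1) + 1) +
    p ^ (n + 2) * q * pqInt p q n / (pqInt p q (n + 1)) ^ 2 * (x / (1 + x))

/-- Statistical convergence of a real sequence. -/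
def StatConv (a : ℕ → ℝ) (l : ℝ) : Prop :=
  ∀ ε > (0 : ℝ), Tendsto (fun n : ℕ =>
    (((Finset.range (n + 1)).filter (fun k => ε ≤ |a k - l|)).card : ℝ) / n)
    atTop (nhds 0)

/-- A modulus of continuity. -/
def IsModulus (ω : ℝ → ℝ) : Prop :=
  (∀ δ, 0 ≤ δ → 0 ≤ ω δ) ∧
  (∀ δ₁ δ₂, 0 ≤ δ₁ → δ₁ ≤ δ₂ → ω δ₁ ≤ ω δ₂) ∧
  (∀ δ₁ δ₂, 0 ≤ δ₁ → 0 ≤ δ₂ → ω (δ₁ + δ₂) ≤ ω δ₁ + ω δ₂) ∧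
  Tendsto ω (nhdsWithin 0 (Set.Ioi 0)) (nhds 0)

/-- Membership in the class `H_ω`. -/
def MemHomega (ω f : ℝ → ℝ) : Prop :=
  ∀ x y : ℝ, 0 ≤ x → 0 ≤ y → |f x - f y| ≤ ω |x / (1 + x) - y / (1 + y)|

/-- The modulus `ω̃(f; δ)`. -/
def omegaTilde (f : ℝ → ℝ) (δ : ℝ) : ℝ :=
  sSup {d | ∃ t x : ℝ, 0 ≤ t ∧ 0 ≤ x ∧ |t / (1 + t) - x / (1 + x)| ≤ δ ∧ d = |f t - f x|}

/-- The bivariate `(p,q)`-Bleimann–Butzer–Hahn operator. -/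
def bbh2 (p₁ p₂ q₁ q₂ : ℝ) (n₁ n₂ : ℕ) (f : ℝ → ℝ → ℝ) (x y : ℝ) : ℝ :=
  (p₁ * p₂ * q₁ * q₂ / (pqEll p₁ q₁ n₁ x * pqEll p₂ q₂ n₂ y)) *
    ∑ k₁ ∈ Finset.range (n₁ + 1), ∑ k₂ ∈ Finset.range (n₂ + 1),
      f (pqNode p₁ q₁ n₁ k₁) (pqNode p₂ q₂ n₂ k₂) *
        p₁ ^ ((n₁ - k₁) * (n₁ - k₁ - 1) / 2) * q₁ ^ (k₁ * (k₁ - 1) / 2) *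
        p₂ ^ ((n₂ - k₂) * (n₂ - k₂ - 1) / 2) * q₂ ^ (k₂ * (k₂ - 1) / 2) *
        pqBinom p₁ q₁ n₁ k₁ * pqBinom p₂ q₂ n₂ k₂ * x ^ k₁ * y ^ k₂

/-- Statistical convergence of a double real sequence (Pringsheim sense). -/
def StatConv2 (a : ℕ → ℕ → ℝ) (l : ℝ) : Prop :=
  ∀ ε > (0 : ℝ), Tendsto (fun N : ℕ × ℕ =>
    ((((Finset.range (N.1 + 1)) ×ˢ (Finset.range (N.2 + 1))).filter
        (fun jk => ε ≤ |a jk.1 jk.2 - l|)).card : ℝ) / (N.1 * N.2))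
    atTop (nhds 0)

/-- A bivariate modulus of continuity. -/
def IsModulus2 (ω : ℝ → ℝ → ℝ) : Prop :=
  (∀ a b, 0 ≤ a → 0 ≤ b → 0 ≤ ω a b) ∧
  (∀ a a' b, 0 ≤ a → a ≤ a' → 0 ≤ b → ω a b ≤ ω a' b) ∧
  (∀ a b b', 0 ≤ a → 0 ≤ b → b ≤ b' → ω a b ≤ ω a b') ∧
  (∀ a a' b, 0 ≤ a → 0 ≤ a' → 0 ≤ b → ω (a + a') b ≤ ω a b + ω a' b) ∧
  (∀ a b b', 0 ≤ a → 0 ≤ b → 0 ≤ b' → ω a (b + b') ≤ ω a b + ω a b') ∧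
  Tendsto (fun d : ℝ × ℝ => ω d.1 d.2)
    (nhdsWithin (0, 0) (Set.Ioi 0 ×ˢ Set.Ioi 0)) (nhds 0)

/-- Membership in the class `H_{ω₂}`. -/
def MemHomega2 (ω g : ℝ → ℝ → ℝ) : Prop :=
  ∀ u₁ v₁ u₂ v₂ : ℝ, 0 ≤ u₁ → 0 ≤ v₁ → 0 ≤ u₂ → 0 ≤ v₂ →
    |g u₁ v₁ - g u₂ v₂| ≤
      ω |u₁ / (1 + u₁) - u₂ / (1 + u₂)| |v₁ / (1 + v₁) - v₂ / (1 + v₂)|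

/-- The bivariate modulus `ω̃(g; δ₁, δ₂)`. -/
def omegaTilde2 (g : ℝ → ℝ → ℝ) (δ₁ δ₂ : ℝ) : ℝ :=
  sSup {d | ∃ t s x y : ℝ, 0 ≤ t ∧ 0 ≤ s ∧ 0 ≤ x ∧ 0 ≤ y ∧
    |t / (1 + t) - x / (1 + x)| ≤ δ₁ ∧ |s / (1 + s) - y / (1 + y)| ≤ δ₂ ∧
    d = |g t s - g x y|}

section PQArithmetic

variable {p q : ℝ}

@[simp]
lemma pqInt_zero : pqInt p q 0 = 0 := by simp [pqInt]

lemma pqInt_one (hpq : p ≠ q) : pqInt p q 1 = 1 := by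
  simp [pqInt, sub_ne_zero.2 hpq]

lemma pqInt_add (hpq : p ≠ q) (a b : ℕ) :
    pqInt p q (a + b) = p ^ b * pqInt p q a + q ^ a * pqInt p q b := by
  have : p - q ≠ 0 := sub_ne_zero.2 hpq
  simp only [pqInt]
  field_simp
  ring

lemma pqInt_pos (hq : 0 ≤ q) (hqp : q < p) {m : ℕ} (hm : m ≠ 0) : 0 < pqInt p q m :=
  div_pos (sub_pos.2 (pow_lt_pow_left₀ hqp hq hm)) (sub_pos.2 hqp)

lemma pqInt_nonneg (hq : 0 ≤ q) (hqp : q < p) (m : ℕ) : 0 ≤ pqInt p q m := by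
  rcases eq_or_ne m 0 with rfl | hm
  · simp
  · exact (pqInt_pos hq hqp hm).le

lemma pqFact_succ (m : ℕ) : pqFact p q (m + 1) = pqFact p q m * pqInt p q (m + 1) := rfl

lemma pqFact_pos (hq : 0 ≤ q) (hqp : q < p) (m : ℕ) : 0 < pqFact p q m := by
  induction m with
  | zero => exact one_pos
  | succ m ih => exact mul_pos ih (pqInt_pos hq hqp m.succ_ne_zero)

lemma pqBinom_pos (hq : 0 ≤ q) (hqp : q < p) (m k : ℕ) : 0 < pqBinom p q m k :=
  div_pos (pqFact_pos hq hqp m) (mul_pos (pqFact_pos hq hqp k) (pqFact_pos hq hqp _))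

lemma pqBinom_zero_right (hq : 0 ≤ q) (hqp : q < p) (m : ℕ) : pqBinom p q m 0 = 1 := by
  simp [pqBinom, pqFact, div_self (pqFact_pos hq hqp m).ne']

lemma pqBinom_self (hq : 0 ≤ q) (hqp : q < p) (m : ℕ) : pqBinom p q m m = 1 := by
  simp [pqBinom, pqFact, div_self (pqFact_pos hq hqp m).ne']

lemma pqBinom_add_left (i j : ℕ) :
    pqBinom p q (i + j) i = pqFact p q (i + j) / (pqFact p q i * pqFact p q j) := by
  rw [pqBinom, Nat.add_sub_cancel_left]

lemma pqBinom_succ_add_succ (hq : 0 ≤ q) (hqp : q < p) (i j : ℕ) :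
    pqBinom p q (i + 1 + (j + 1)) (i + 1) =
      p ^ (i + 1) * pqBinom p q (i + 1 + j) (i + 1) +
        q ^ (j + 1) * pqBinom p q (i + (j + 1)) i := by
  have hN : pqInt p q (i + j + 2) =
      p ^ (i + 1) * pqInt p q (j + 1) + q ^ (j + 1) * pqInt p q (i + 1) := by
    rw [show i + j + 2 = j + 1 + (i + 1) by ring, pqInt_add hqp.ne']
  rw [pqBinom_add_left, pqBinom_add_left, pqBinom_add_left,
    show i + 1 + (j + 1) = i + j + 1 + 1 by ring, show i + 1 + j = i + j + 1 by ring,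
    show i + (j + 1) = i + j + 1 by ring, pqFact_succ (i + j + 1), pqFact_succ i, pqFact_succ j,
    show i + j + 1 + 1 = i + j + 2 by ring, hN]
  have := (pqFact_pos hq hqp i).ne'
  have := (pqFact_pos hq hqp j).ne'
  have := (pqInt_pos hq hqp i.succ_ne_zero).ne'
  have := (pqInt_pos hq hqp j.succ_ne_zero).ne'
  field_simp

lemma pqInt_mul_pqBinom_succ (hq : 0 ≤ q) (hqp : q < p) (i j : ℕ) :
    pqInt p q (i + 1) * pqBinom p q (i + 1 + j) (i + 1) =
      pqInt p q (i + j + 1) * pqBinom p q (i + j) i := by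
  rw [pqBinom_add_left, pqBinom_add_left, show i + 1 + j = i + j + 1 by ring, pqFact_succ (i + j),
    pqFact_succ i]
  have := (pqFact_pos hq hqp i).ne'
  have := (pqFact_pos hq hqp j).ne'
  have := (pqInt_pos hq hqp i.succ_ne_zero).ne'
  field_simp

end PQArithmetic

def bbhWeight (p q : ℝ) (n : ℕ) (x : ℝ) (k : ℕ) : ℝ :=
  p ^ ((n - k) * (n - k - 1) / 2) * q ^ (k * (k - 1) / 2) * pqBinom p q n k * x ^ k

section Weights

variable {p q : ℝ}

lemma bbhWeight_add_left (x : ℝ) (i j : ℕ) :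
    bbhWeight p q (i + j) x i =
      p ^ (j * (j - 1) / 2) * q ^ (i * (i - 1) / 2) * pqBinom p q (i + j) i * x ^ i := by
  rw [bbhWeight, Nat.add_sub_cancel_left]

lemma bbhWeight_nonneg (hq : 0 ≤ q) (hqp : q < p) {x : ℝ} (hx : 0 ≤ x) (n k : ℕ) :
    0 ≤ bbhWeight p q n x k := by
  have := pqBinom_pos hq hqp n k
  have : 0 ≤ p := hq.trans hqp.le
  unfold bbhWeight
  positivity

lemma bbhWeight_succ_zero (hq : 0 ≤ q) (hqp : q < p) (n : ℕ) (x : ℝ) :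
    bbhWeight p q (n + 1) x 0 = p ^ n * bbhWeight p q n x 0 := by
  have h := bbhWeight_add_left (p := p) (q := q) x 0
  simp only [zero_add] at h
  rw [h, h, Nat.triangle_succ, pow_add, pqBinom_zero_right hq hqp, pqBinom_zero_right hq hqp]
  ring

lemma bbhWeight_succ_self (hq : 0 ≤ q) (hqp : q < p) (n : ℕ) (x : ℝ) :
    bbhWeight p q (n + 1) x (n + 1) = q ^ n * x * bbhWeight p q n x n := by
  have h := bbhWeight_add_left (p := p) (q := q) x
  have h1 := h (n + 1) 0
  have h0 := h n 0
  simp only [add_zero] at h0 h1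
  rw [h1, h0, Nat.triangle_succ, pqBinom_self hq hqp, pqBinom_self hq hqp]
  ring

lemma bbhWeight_succ_succ (hq : 0 ≤ q) (hqp : q < p) (x : ℝ) {n j : ℕ} (hj : j < n) :
    bbhWeight p q (n + 1) x (j + 1) =
      p ^ n * bbhWeight p q n x (j + 1) + q ^ n * x * bbhWeight p q n x j := by
  obtain ⟨d, rfl⟩ : ∃ d, n = j + 1 + d := ⟨n - (j + 1), by omega⟩
  rw [show j + 1 + d + 1 = j + 1 + (d + 1) by ring, bbhWeight_add_left, bbhWeight_add_left,
    show j + 1 + d = j + (d + 1) by ring, bbhWeight_add_left, pqBinom_succ_add_succ hq hqp,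
    show j + (d + 1) = j + 1 + d by ring, Nat.triangle_succ, Nat.triangle_succ]
  ring

lemma sum_bbhWeight (hq : 0 ≤ q) (hqp : q < p) (n : ℕ) (x : ℝ) :
    ∑ k ∈ range (n + 1), bbhWeight p q n x k = pqEll p q n x := by
  induction n with
  | zero => simp [bbhWeight, pqEll, pqBinom_self hq hqp]
  | succ n ih =>
    have hsplit : ∑ k ∈ range (n + 2), bbhWeight p q (n + 1) x k =
        p ^ n * ∑ k ∈ range (n + 1), bbhWeight p q n x k +
          q ^ n * x * ∑ k ∈ range (n + 1), bbhWeight p q n x k := by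
      rw [sum_range_succ', sum_range_succ, mul_sum, mul_sum, sum_range_succ' _ n,
        sum_range_succ _ n, bbhWeight_succ_zero hq hqp, bbhWeight_succ_self hq hqp]
      rw [sum_congr rfl fun j hj => bbhWeight_succ_succ hq hqp x (mem_range.1 hj), sum_add_distrib]
      ring
    rw [hsplit, ih, pqEll, pqEll, prod_range_succ]
    ring

end Weights

def pqNodeNum (p q : ℝ) (n k : ℕ) : ℝ := p ^ (n - k + 1) * pqInt p q k

section Moments

variable {p q : ℝ}

lemma pqEll_one (x : ℝ) : pqEll p q 1 x = 1 + x := by simp [pqEll]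

lemma pqEll_two (x : ℝ) : pqEll p q 2 x = (1 + x) * (p + q * x) := by
  simp [pqEll, prod_range_succ]

lemma pqEll_mul_sum_bbhWeight (hq : 0 ≤ q) (hqp : q < p) (r m : ℕ) (x : ℝ) :
    pqEll p q r x *
        ∑ k ∈ range (m + 1), bbhWeight p q m x k * (q ^ (r * k) * p ^ (r * (m - k))) =
      pqEll p q (r + m) x := by
  have hp : p ≠ 0 := (hq.trans_lt hqp).ne'
  have hterm : ∀ k ∈ range (m + 1), bbhWeight p q m x k * (q ^ (r * k) * p ^ (r * (m - k))) =
      p ^ (r * m) * bbhWeight p q m (q ^ r * x / p ^ r) k := by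
    intro k hk
    rw [show r * m = r * (m - k) + r * k by rw [← Nat.mul_add, Nat.sub_add_cancel (by grind)],
      bbhWeight, bbhWeight, pow_add, div_pow, mul_pow]
    simp only [pow_mul]
    field_simp
  have hpow : p ^ (r * m) = ∏ _s ∈ range m, p ^ r := by rw [prod_const, card_range, pow_mul]
  rw [sum_congr rfl hterm, ← mul_sum, sum_bbhWeight hq hqp, pqEll, pqEll, pqEll, prod_range_add,
    hpow, ← prod_mul_distrib]
  congr 1
  refine prod_congr rfl fun s _ => ?_
  field_simp
  ring

lemma bbhWeight_succ_mul_pqInt (hq : 0 ≤ q) (hqp : q < p) (x : ℝ) {n j : ℕ} (hj : j ≤ n) :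
    bbhWeight p q (n + 1) x (j + 1) * pqInt p q (j + 1) =
      pqInt p q (n + 1) * x * q ^ j * bbhWeight p q n x j := by
  obtain ⟨d, rfl⟩ : ∃ d, n = j + d := ⟨n - j, by omega⟩
  have h := pqInt_mul_pqBinom_succ (p := p) (q := q) hq hqp j d
  rw [show j + d + 1 = j + 1 + d by ring] at h ⊢
  rw [bbhWeight_add_left, bbhWeight_add_left, Nat.triangle_succ]
  linear_combination p ^ (d * (d - 1) / 2) * q ^ (j * (j - 1) / 2) * q ^ j * x ^ (j + 1) * h

lemma sum_bbhWeight_mul_pqInt (hq : 0 ≤ q) (hqp : q < p) (n : ℕ) (x : ℝ) (g : ℕ → ℝ) :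
    ∑ k ∈ range (n + 2), bbhWeight p q (n + 1) x k * pqInt p q k * g k =
      pqInt p q (n + 1) * x * ∑ j ∈ range (n + 1), q ^ j * bbhWeight p q n x j * g (j + 1) := by
  rw [sum_range_succ', mul_sum]
  simp only [pqInt_zero, mul_zero, zero_mul, add_zero]
  refine sum_congr rfl fun j hj => ?_
  rw [bbhWeight_succ_mul_pqInt hq hqp x (Nat.lt_succ_iff.1 (mem_range.1 hj))]
  ring

lemma sum_bbhWeight_mul_pqNodeNum (hq : 0 ≤ q) (hqp : q < p) (n : ℕ) (x : ℝ) :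
    (1 + x) * ∑ k ∈ range (n + 1), bbhWeight p q n x k * pqNodeNum p q n k =
      pqInt p q n * p * x * pqEll p q n x := by
  cases n with
  | zero => simp [pqNodeNum]
  | succ n =>
    have hshift := pqEll_mul_sum_bbhWeight hq hqp 1 n x
    rw [pqEll_one, add_comm 1 n] at hshift
    have hinner : ∑ j ∈ range (n + 1), q ^ j * bbhWeight p q n x j * p ^ (n + 1 - (j + 1) + 1) =
        p * ∑ j ∈ range (n + 1), bbhWeight p q n x j * (q ^ (1 * j) * p ^ (1 * (n - j))) := by
      rw [mul_sum]
      refine sum_congr rfl fun j hj => ?_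
      rw [show n + 1 - (j + 1) + 1 = n - j + 1 by grind]
      ring
    have hnum : ∑ k ∈ range (n + 2), bbhWeight p q (n + 1) x k * pqNodeNum p q (n + 1) k =
        ∑ k ∈ range (n + 2), bbhWeight p q (n + 1) x k * pqInt p q k * p ^ (n + 1 - k + 1) :=
      sum_congr rfl fun k _ => by rw [pqNodeNum]; ring
    rw [hnum, sum_bbhWeight_mul_pqInt hq hqp, hinner]
    linear_combination pqInt p q (n + 1) * x * p * hshift

lemma sum_bbhWeight_mul_pqInt_mul_pow (hq : 0 ≤ q) (hqp : q < p) (n : ℕ) (x : ℝ) :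
    (1 + x) * (p + q * x) *
        ∑ j ∈ range (n + 1),
          bbhWeight p q n x j * pqInt p q j * (q ^ j * p ^ (2 * (n - j + 1))) =
      pqInt p q n * q * p ^ 2 * x * pqEll p q (n + 1) x := by
  cases n with
  | zero => simp
  | succ n =>
    have hshift := pqEll_mul_sum_bbhWeight hq hqp 2 n x
    rw [pqEll_two, add_comm 2 n] at hshift
    have hinner : ∑ j ∈ range (n + 1),
        q ^ j * bbhWeight p q n x j * (q ^ (j + 1) * p ^ (2 * (n + 1 - (j + 1) + 1))) =
          q * p ^ 2 *
            ∑ j ∈ range (n + 1), bbhWeight p q n x j * (q ^ (2 * j) * p ^ (2 * (n - j))) := by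
      rw [mul_sum]
      refine sum_congr rfl fun j hj => ?_
      rw [show n + 1 - (j + 1) + 1 = n - j + 1 by grind]
      ring
    rw [sum_bbhWeight_mul_pqInt hq hqp, hinner]
    linear_combination pqInt p q (n + 1) * x * q * p ^ 2 * hshift

lemma sum_bbhWeight_mul_pqNodeNum_sq (hq : 0 ≤ q) (hqp : q < p) (n : ℕ) (x : ℝ) :
    (1 + x) * (p + q * x) * ∑ k ∈ range (n + 1), bbhWeight p q n x k * pqNodeNum p q n k ^ 2 =
      pqInt p q n * pqEll p q n x *
        (x * p ^ (n + 1) * (p + q * x) + q ^ 2 * p ^ 2 * pqInt p q (n - 1) * x ^ 2) := by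
  cases n with
  | zero => simp [pqNodeNum]
  | succ n =>
    have hshift := pqEll_mul_sum_bbhWeight hq hqp 1 n x
    rw [pqEll_one, add_comm 1 n] at hshift
    have hsecond := sum_bbhWeight_mul_pqInt_mul_pow hq hqp n x
    have hinner : ∑ j ∈ range (n + 1),
        q ^ j * bbhWeight p q n x j * (p ^ (2 * (n + 1 - (j + 1) + 1)) * pqInt p q (j + 1)) =
          p ^ (n + 2) *
              ∑ j ∈ range (n + 1), bbhWeight p q n x j * (q ^ (1 * j) * p ^ (1 * (n - j))) +
            q * ∑ j ∈ range (n + 1),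
              bbhWeight p q n x j * pqInt p q j * (q ^ j * p ^ (2 * (n - j + 1))) := by
      rw [mul_sum, mul_sum, ← sum_add_distrib]
      refine sum_congr rfl fun j hj => ?_
      obtain ⟨d, rfl⟩ : ∃ d, n = j + d := ⟨n - j, by grind⟩
      rw [show j + d + 1 - (j + 1) + 1 = d + 1 by omega, Nat.add_sub_cancel_left,
        show j + 1 = 1 + j by ring, pqInt_add hqp.ne', pqInt_one hqp.ne']
      ring
    have hnum : ∑ k ∈ range (n + 2), bbhWeight p q (n + 1) x k * pqNodeNum p q (n + 1) k ^ 2 =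
        ∑ k ∈ range (n + 2),
          bbhWeight p q (n + 1) x k * pqInt p q k * (p ^ (2 * (n + 1 - k + 1)) * pqInt p q k) :=
      sum_congr rfl fun k _ => by rw [pqNodeNum]; ring
    rw [hnum, sum_bbhWeight_mul_pqInt hq hqp, hinner, Nat.add_sub_cancel]
    linear_combination pqInt p q (n + 1) * x * p ^ (n + 2) * (p + q * x) * hshift +
      pqInt p q (n + 1) * x * q * hsecond

end Moments

def bbhCoeff (p q : ℝ) (n : ℕ) (x : ℝ) (k : ℕ) : ℝ :=
  p * q / pqEll p q n x * bbhWeight p q n x k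

section Operator

variable {p q : ℝ}

lemma pqEll_pos (hq : 0 ≤ q) (hqp : q < p) {x : ℝ} (hx : 0 ≤ x) (n : ℕ) :
    0 < pqEll p q n x :=
  prod_pos fun s _ => by
    have := pow_pos (hq.trans_lt hqp) s
    positivity

lemma pqNode_nonneg (hq : 0 ≤ q) (hqp : q < p) (n k : ℕ) : 0 ≤ pqNode p q n k := by
  have := pqInt_nonneg hq hqp k
  have := pqInt_nonneg hq hqp (n - k + 1)
  have := hq.trans hqp.le
  unfold pqNode
  positivity

lemma pqNode_div_one_add (hq : 0 < q) (hqp : q < p) {n k : ℕ} (hk : k ≤ n) :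
    pqNode p q n k / (1 + pqNode p q n k) = pqNodeNum p q n k / pqInt p q (n + 1) := by
  obtain ⟨d, rfl⟩ : ∃ d, n = k + d := ⟨n - k, by omega⟩
  have := (pqInt_pos hq.le hqp d.succ_ne_zero).ne'
  have := (pow_pos hq k).ne'
  have hsum : pqInt p q (k + d + 1) = pqInt p q (d + 1) * q ^ k + pqNodeNum p q (k + d) k := by
    rw [pqNodeNum, Nat.add_sub_cancel_left, add_assoc, pqInt_add hqp.ne']
    ring
  rw [hsum, pqNode, pqNodeNum, Nat.add_sub_cancel_left]
  field_simp

lemma bbh_eq_sum (p q : ℝ) (n : ℕ) (f : ℝ → ℝ) (x : ℝ) :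
    bbh p q n f x = ∑ k ∈ range (n + 1), bbhCoeff p q n x k * f (pqNode p q n k) := by
  rw [bbh, mul_sum]
  refine sum_congr rfl fun k _ => ?_
  rw [bbhCoeff, bbhWeight]
  ring

lemma bbhCoeff_nonneg (hq : 0 < q) (hqp : q < p) {x : ℝ} (hx : 0 ≤ x) (n k : ℕ) :
    0 ≤ bbhCoeff p q n x k :=
  mul_nonneg (div_nonneg (mul_nonneg (hq.trans hqp).le hq.le) (pqEll_pos hq.le hqp hx n).le)
    (bbhWeight_nonneg hq.le hqp hx n k)

lemma sum_bbhCoeff (hq : 0 < q) (hqp : q < p) {x : ℝ} (hx : 0 ≤ x) (n : ℕ) :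
    ∑ k ∈ range (n + 1), bbhCoeff p q n x k = p * q := by
  simp only [bbhCoeff]
  rw [← mul_sum, sum_bbhWeight hq.le hqp, div_mul_cancel₀ _ (pqEll_pos hq.le hqp hx n).ne']

lemma bbh_sq_sub_eq (hq : 0 < q) (hqp : q < p) (n : ℕ) {x : ℝ} (hx : 0 ≤ x) :
    bbh p q n (fun t => (t / (1 + t) - x / (1 + x)) ^ 2) x =
      p * q * (pqInt p q n * p ^ (n + 1) * (x / (1 + x)) / pqInt p q (n + 1) ^ 2 +
        p ^ 2 * q ^ 2 * pqInt p q n * pqInt p q (n - 1) * (x / (1 + x)) ^ 2 *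
          ((1 + x) / (p + q * x)) / pqInt p q (n + 1) ^ 2 -
        2 * p * pqInt p q n * (x / (1 + x)) ^ 2 / pqInt p q (n + 1) + (x / (1 + x)) ^ 2) := by
  have hℓ := (pqEll_pos hq.le hqp hx n).ne'
  have hN := (pqInt_pos hq.le hqp n.succ_ne_zero).ne'
  have h1x : 1 + x ≠ 0 := by positivity
  have hpx : p + q * x ≠ 0 := by
    have := hq.trans hqp
    positivity
  have hS0 := sum_bbhWeight hq.le hqp n x
  have hS1 : ∑ k ∈ range (n + 1), bbhWeight p q n x k * pqNodeNum p q n k =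
      pqInt p q n * p * x * pqEll p q n x / (1 + x) :=
    eq_div_of_mul_eq h1x (by rw [mul_comm]; exact sum_bbhWeight_mul_pqNodeNum hq.le hqp n x)
  have hS2 : ∑ k ∈ range (n + 1), bbhWeight p q n x k * pqNodeNum p q n k ^ 2 =
      pqInt p q n * pqEll p q n x *
        (x * p ^ (n + 1) * (p + q * x) + q ^ 2 * p ^ 2 * pqInt p q (n - 1) * x ^ 2) /
          ((1 + x) * (p + q * x)) :=
    eq_div_of_mul_eq (mul_ne_zero h1x hpx)
      (by rw [mul_comm]; exact sum_bbhWeight_mul_pqNodeNum_sq hq.le hqp n x)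
  have hterm : ∀ k ∈ range (n + 1),
      bbhCoeff p q n x k * (pqNode p q n k / (1 + pqNode p q n k) - x / (1 + x)) ^ 2 =
        p * q / pqEll p q n x *
          (bbhWeight p q n x k * pqNodeNum p q n k ^ 2 / pqInt p q (n + 1) ^ 2 -
          2 * (x / (1 + x)) / pqInt p q (n + 1) * (bbhWeight p q n x k * pqNodeNum p q n k) +
          (x / (1 + x)) ^ 2 * bbhWeight p q n x k) := fun k hk => by
    rw [pqNode_div_one_add hq hqp (Nat.lt_succ_iff.1 (mem_range.1 hk)), bbhCoeff]
    field_simp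
    ring
  rw [bbh_eq_sum, sum_congr rfl hterm, ← mul_sum, sum_add_distrib, sum_sub_distrib, ← sum_div,
    ← mul_sum, ← mul_sum, hS0, hS1, hS2]
  field_simp

lemma bbh_sq_sub_le_pqDelta (hq : 0 < q) (hqp : q < p) (hp : p ≤ 1) (n : ℕ) {x : ℝ}
    (hx : 0 ≤ x) :
    bbh p q n (fun t => (t / (1 + t) - x / (1 + x)) ^ 2) x ≤ pqDelta p q n x := by
  have hp0 := hq.trans hqp
  have hN := pqInt_pos hq.le hqp (m := n + 1) (by omega)
  have h1x : 0 < 1 + x := by positivity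
  have hpx : 0 < p + q * x := by positivity
  have hA := pqInt_nonneg hq.le hqp n
  have hB := pqInt_nonneg hq.le hqp (n - 1)
  have hpA : p * pqInt p q n / pqInt p q (n + 1) ≤ 1 := by
    rw [div_le_one hN, pqInt_add hqp.ne', pqInt_one hqp.ne', pow_one]
    nlinarith [pow_pos hq n]
  have hT1 : 0 ≤ p ^ 2 * q ^ 3 * pqInt p q n * pqInt p q (n - 1) * ((1 + x) / (p + q * x)) *
      (1 - p) / pqInt p q (n + 1) ^ 2 := by
    have : 0 ≤ 1 - p := by linarith
    positivity
  -- with `hpA` this term is at least `1 - 2q + pq ≥ (1 - q)^2`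
  have hT2 : 0 ≤ 1 - p * q - 2 * q * (1 - p) * (p * pqInt p q n / pqInt p q (n + 1)) := by
    have : 0 ≤ p * pqInt p q n / pqInt p q (n + 1) := by positivity
    nlinarith [sq_nonneg (1 - q), mul_nonneg hq.le (sub_nonneg.2 hp)]
  have hdiff : pqDelta p q n x = bbh p q n (fun t => (t / (1 + t) - x / (1 + x)) ^ 2) x +
      (x / (1 + x)) ^ 2 * (p ^ 2 * q ^ 3 * pqInt p q n * pqInt p q (n - 1) *
        ((1 + x) / (p + q * x)) * (1 - p) / pqInt p q (n + 1) ^ 2 +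
          (1 - p * q - 2 * q * (1 - p) * (p * pqInt p q n / pqInt p q (n + 1)))) := by
    rw [bbh_sq_sub_eq hq hqp n hx, pqDelta]
    field_simp
    ring
  rw [hdiff]
  have := add_nonneg hT1 hT2
  nlinarith [sq_nonneg (x / (1 + x))]

end Operator

lemma sum_mul_rpow_le_rpow_sum_mul {ι : Type*} (s : Finset ι) {c a : ι → ℝ} {β : ℝ}
    (hc : ∀ i, 0 ≤ c i) (hcs : ∑ i ∈ s, c i ≤ 1) (ha : ∀ i, 0 ≤ a i) (hβ0 : 0 < β)
    (hβ1 : β ≤ 1) :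
    ∑ i ∈ s, c i * a i ^ β ≤ (∑ i ∈ s, c i * a i) ^ β := by
  have hHolder := Real.inner_le_weight_mul_Lp_of_nonneg s ((one_le_inv₀ hβ0).2 hβ1) c
    (fun i => a i ^ β) hc fun i => Real.rpow_nonneg (ha i) β
  simp only [Real.rpow_rpow_inv (ha _) hβ0.ne', inv_inv] at hHolder
  refine hHolder.trans (mul_le_of_le_one_left
    (Real.rpow_nonneg (sum_nonneg fun i _ => mul_nonneg (hc i) (ha i)) _) ?_)
  exact Real.rpow_le_one (sum_nonneg fun i _ => hc i) hcs (by linarith)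

lemma abs_div_one_add_sub_div_one_add_le {a b : ℝ} (ha : 0 ≤ a) (hb : 0 ≤ b) :
    |a / (1 + a) - b / (1 + b)| ≤ |a - b| := by
  have key : a / (1 + a) - b / (1 + b) = (a - b) / ((1 + a) * (1 + b)) := by
    field_simp
    ring
  have hden : 1 ≤ (1 + a) * (1 + b) := by nlinarith
  rw [key, abs_div, abs_of_pos (show 0 < (1 + a) * (1 + b) by positivity)]
  exact div_le_self (abs_nonneg _) hden

def IsLipschitzType (M α : ℝ) (E : Set ℝ) (f : ℝ → ℝ) : Prop :=
  ∀ t : ℝ, 0 ≤ t → ∀ y ∈ E, |f t - f y| ≤ M * |t / (1 + t) - y / (1 + y)| ^ α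

section LipschitzType

variable {M α : ℝ} {E : Set ℝ} {f : ℝ → ℝ}

lemma IsLipschitzType.abs_sub_le_infDist (hf : IsLipschitzType M α E f) (hα0 : 0 ≤ α) (hα1 : α ≤ 1)
    (hM : 0 ≤ M) (hE : E ⊆ Set.Ici 0) (hEne : E.Nonempty) (hEcl : IsClosed E) {t x : ℝ}
    (ht : 0 ≤ t) (hx : 0 ≤ x) :
    |f t - f x| ≤ M * (|t / (1 + t) - x / (1 + x)| ^ α + 2 * Metric.infDist x E ^ α) := by
  obtain ⟨y, hyE, hy⟩ := hEcl.exists_infDist_eq_dist hEne x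
  set D := |x / (1 + x) - y / (1 + y)|
  have hD : D ^ α ≤ Metric.infDist x E ^ α := by
    refine Real.rpow_le_rpow (abs_nonneg _) ?_ hα0
    rw [hy, Real.dist_eq]
    exact abs_div_one_add_sub_div_one_add_le hx (hE hyE)
  have hty : |t / (1 + t) - y / (1 + y)| ^ α ≤ |t / (1 + t) - x / (1 + x)| ^ α + D ^ α :=
    (Real.rpow_le_rpow (abs_nonneg _) (abs_sub_le _ _ _) hα0).trans
      (Real.rpow_add_le_add_rpow (abs_nonneg _) (abs_nonneg _) hα0 hα1)
  calc |f t - f x| ≤ |f t - f y| + |f x - f y| := by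
        simpa only [abs_sub_comm (f y)] using abs_sub_le (f t) (f y) (f x)
    _ ≤ M * |t / (1 + t) - y / (1 + y)| ^ α + M * D ^ α :=
      add_le_add (hf t ht y hyE) (hf x hx y hyE)
    _ ≤ M * (|t / (1 + t) - x / (1 + x)| ^ α + D ^ α) + M * D ^ α := by gcongr
    _ ≤ M * (|t / (1 + t) - x / (1 + x)| ^ α + 2 * Metric.infDist x E ^ α) := by nlinarith

lemma IsLipschitzType.abs_sum_mul_sub_le (hf : IsLipschitzType M α E f) (hα0 : 0 < α)
    (hα1 : α ≤ 1) (hM : 0 ≤ M) (hE : E ⊆ Set.Ici 0) (hEne : E.Nonempty) (hEcl : IsClosed E)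
    {ι : Type*} (s : Finset ι) {c t : ι → ℝ} (hc : ∀ i, 0 ≤ c i) (hcs : ∑ i ∈ s, c i ≤ 1)
    (ht : ∀ i ∈ s, 0 ≤ t i) {x : ℝ} (hx : 0 ≤ x) :
    |∑ i ∈ s, c i * f (t i) - (∑ i ∈ s, c i) * f x| ≤
      M * ((∑ i ∈ s, c i * (t i / (1 + t i) - x / (1 + x)) ^ 2) ^ (α / 2) +
        2 * Metric.infDist x E ^ α) := by
  have hDα : 0 ≤ Metric.infDist x E ^ α := Real.rpow_nonneg Metric.infDist_nonneg α
  have habs_rpow (u : ℝ) : |u| ^ α = (u ^ 2) ^ (α / 2) := by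
    rw [← sq_abs, ← Real.rpow_natCast, ← Real.rpow_mul (abs_nonneg u), Nat.cast_ofNat,
      mul_div_cancel₀ α two_ne_zero]
  have hJensen := sum_mul_rpow_le_rpow_sum_mul s hc hcs
    (a := fun i => (t i / (1 + t i) - x / (1 + x)) ^ 2) (fun i => sq_nonneg _)
    (half_pos hα0) (by linarith)
  calc |∑ i ∈ s, c i * f (t i) - (∑ i ∈ s, c i) * f x|
      = |∑ i ∈ s, c i * (f (t i) - f x)| := by simp only [mul_sub, sum_sub_distrib, sum_mul]
    _ ≤ ∑ i ∈ s, c i *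
          (M * (|t i / (1 + t i) - x / (1 + x)| ^ α + 2 * Metric.infDist x E ^ α)) := by
      refine (abs_sum_le_sum_abs _ _).trans (sum_le_sum fun i hi => ?_)
      rw [abs_mul, abs_of_nonneg (hc i)]
      exact mul_le_mul_of_nonneg_left
        (hf.abs_sub_le_infDist hα0.le hα1 hM hE hEne hEcl (ht i hi) hx) (hc i)
    _ = M * (∑ i ∈ s, c i * |t i / (1 + t i) - x / (1 + x)| ^ α +
          (∑ i ∈ s, c i) * (2 * Metric.infDist x E ^ α)) := by
      rw [sum_mul, ← sum_add_distrib, mul_sum]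
      exact sum_congr rfl fun i _ => by ring
    _ ≤ M * ((∑ i ∈ s, c i * (t i / (1 + t i) - x / (1 + x)) ^ 2) ^ (α / 2) +
          2 * Metric.infDist x E ^ α) := by
      refine mul_le_mul_of_nonneg_left (add_le_add ?_ ?_) hM
      · simpa only [habs_rpow] using hJensen
      · exact mul_le_of_le_one_left (by positivity) hcs

end LipschitzType

theorem bbh_lipschitz_estimate_general (n : ℕ) (p q : ℝ)
    (hq : 0 < q) (hqp : q < p) (hp : p ≤ 1)
    (α : ℝ) (hα0 : 0 < α) (hα1 : α ≤ 1) (M : ℝ) (hM : 0 < M)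
    (E : Set ℝ) (hE : E ⊆ Set.Ici 0) (hEne : E.Nonempty) (hEcl : IsClosed E)
    (f : ℝ → ℝ)
    (hf : ∀ t : ℝ, 0 ≤ t → ∀ y ∈ E,
      |f t - f y| ≤ M * |t / (1 + t) - y / (1 + y)| ^ α)
    (x : ℝ) (hx : 0 ≤ x) :
    |bbh p q n f x - p * q * f x| ≤
      M * (pqDelta p q n x ^ (α / 2) + 2 * Metric.infDist x E ^ α) := by
  have hsum := sum_bbhCoeff hq hqp hx n
  have hpq : p * q ≤ 1 := by nlinarith
  have hc := bbhCoeff_nonneg hq hqp hx n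
  have hvar : ∑ k ∈ range (n + 1),
      bbhCoeff p q n x k * (pqNode p q n k / (1 + pqNode p q n k) - x / (1 + x)) ^ 2 ≤
        pqDelta p q n x := by
    simpa only [bbh_eq_sum] using bbh_sq_sub_le_pqDelta hq hqp hp n hx
  have hest := IsLipschitzType.abs_sum_mul_sub_le hf hα0 hα1 hM.le hE hEne hEcl (range (n + 1))
    hc (hsum.trans_le hpq) (fun k _ => pqNode_nonneg hq.le hqp n k) hx
  rw [hsum, ← bbh_eq_sum] at hest
  refine hest.trans (mul_le_mul_of_nonneg_left (add_le_add_left ?_ _) hM.le)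
  exact Real.rpow_le_rpow (sum_nonneg fun k _ => mul_nonneg (hc k) (sq_nonneg _)) hvar
    (by linarith)

/-- Theorem 3.2, Lipschitz-type estimate. -/
theorem bbh_lipschitz_estimate (n : ℕ) (hn : 1 ≤ n) (p q : ℝ)
    (hq : 0 < q) (hqp : q < p) (hp : p ≤ 1)
    (α : ℝ) (hα0 : 0 < α) (hα1 : α ≤ 1) (M : ℝ) (hM : 0 < M)
    (E : Set ℝ) (hE : E ⊆ Set.Ici 0) (hEne : E.Nonempty) (hEcl : IsClosed E)
    (f : ℝ → ℝ)
    (hfb : ∃ C : ℝ, ∀ t : ℝ, 0 ≤ t → |f t| ≤ C)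
    (hfc : ContinuousOn f (Set.Ici 0))
    (hf : ∀ t : ℝ, 0 ≤ t → ∀ y ∈ E,
      |f t - f y| ≤ M * |t / (1 + t) - y / (1 + y)| ^ α)
    (x : ℝ) (hx : 0 ≤ x) :
    |bbh p q n f x - p * q * f x| ≤
      M * (pqDelta p q n x ^ (α / 2) + 2 * Metric.infDist x E ^ α) :=
  bbh_lipschitz_estimate_general n p q hq hqp hp α hα0 hα1 M hM E hE hEne hEcl f hf x hx
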